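/- In the scaled one-step NormalHedge setting, suppose the set I₂ = {i : R_i > 0} is nonempty, the average potential satisfies Ψ = (1/N)·Σ_{i=1}^N Φ(R_i) < 2.32, and (1/|I₂|)·Σ_{i∈I₂} Φ(R_i) ≥ B for some real B ≥ 1. Then Σ_{i∈I₂} (Φ(R'_i) − Φ(R_i)) ≤ α·|I₂|·B·(2/3 − (4/5)·ln B). -/

import Mathlib

open Finset

/-- The NormalHedge potential function: `Φ(x) = exp(x²/8)` for `x > 0`, `1` for `x ≤ 0`. -/
noncomputable def Phi (x : ℝ) : ℝ := if 0 < x then Real.exp (x ^ 2 / 8) else 1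

/-- Derivative of the potential: `Φ'(x) = (x/4)·exp(x²/8)` for `x > 0`, `0` for `x ≤ 0`. -/
noncomputable def Phi' (x : ℝ) : ℝ := if 0 < x then (x / 4) * Real.exp (x ^ 2 / 8) else 0

open Real Set

/-!
For an action with positive regret, `Φ` agrees near `Rᵢ` to first order with the smooth majorant
`exp (x²/8)`, so a second-order Taylor expansion bounds `Φ(R'ᵢ) - Φ(Rᵢ)` by
`Φ'(Rᵢ)(gᵢ - g_A) - α Rᵢ Φ'(Rᵢ)` plus a quadratic remainder. Since `Φ(Rᵢ) ≤ N Ψ < 2.32 N` and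
`α log(2.32 N) < 1/800`, we have `α Rᵢ² < 1/100`, and the remainder is at most
`α Φ(Rᵢ)(2/3 + 3Rᵢ²/20)`. Adding the drift term, the step costs at most `α F(Φ(Rᵢ))` besides the
first-order term, where `F(y) = y (2/3 - (4/5) log y)`, because `log Φ(Rᵢ) = Rᵢ²/8`.
Summed over `I₂`, the first-order terms cancel: the weights `pᵢ ∝ Φ'(Rᵢ)` vanish off `I₂` and
`g_A` is their weighted mean. Finally `F` is concave and decreasing on `[1, ∞)`, so by Jensen
`∑ F(Φ(Rᵢ)) ≤ |I₂| F(mean) ≤ |I₂| F(B)`.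
-/

theorem sub_le_deriv_mul_add_of_iteratedDeriv_two_le {f : ℝ → ℝ} {a b M : ℝ}
    (hf : ContDiff ℝ 2 f) (hM : ∀ x ∈ uIcc a b, iteratedDeriv 2 f x ≤ M) :
    f b - f a ≤ deriv f a * (b - a) + M / 2 * (b - a) ^ 2 := by
  rcases eq_or_ne a b with rfl | hab
  · simp
  obtain ⟨x, hx, hTaylor⟩ :=
    taylor_mean_remainder_lagrange_iteratedDeriv (n := 1) hab hf.contDiffOn
  have hderiv : derivWithin f (uIcc a b) a = deriv f a :=
    ((hf.differentiable two_ne_zero) a).derivWithin (uniqueDiffOn_uIcc hab a left_mem_uIcc)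
  norm_num [hderiv] at hTaylor
  nlinarith [hM x (uIoo_subset_uIcc_self hx), sq_nonneg (b - a)]

theorem abs_sum_div_sum_mul_le {ι : Type*} [Fintype ι] {w g : ι → ℝ} {C : ℝ}
    (hw : ∀ i, 0 ≤ w i) (hS : 0 < ∑ j, w j) (hg : ∀ i, |g i| ≤ C) :
    |∑ i, w i / (∑ j, w j) * g i| ≤ C :=
  calc |∑ i, w i / (∑ j, w j) * g i| ≤ ∑ i, w i / (∑ j, w j) * C := by
        refine (abs_sum_le_sum_abs _ _).trans (sum_le_sum fun i _ => ?_)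
        rw [abs_mul, abs_of_nonneg (div_nonneg (hw i) hS.le)]
        gcongr
        · exact div_nonneg (hw i) hS.le
        · exact hg i
    _ = C := by rw [← sum_mul, ← sum_div, div_self hS.ne', one_mul]

theorem sum_mul_sub_sum_div_sum_mul {ι : Type*} [Fintype ι] {w g : ι → ℝ} (hS : ∑ j, w j ≠ 0) :
    ∑ i, w i * (g i - ∑ j, w j / (∑ k, w k) * g j) = 0 := by
  simp only [mul_sub, sum_sub_distrib, ← sum_mul, div_mul_eq_mul_div, ← sum_div]
  field_simp
  ring

theorem hasDerivAt_exp_sq_div_eight (x : ℝ) :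
    HasDerivAt (fun y => exp (y ^ 2 / 8)) (x / 4 * exp (x ^ 2 / 8)) x := by
  convert ((hasDerivAt_pow 2 x).div_const 8).exp using 1
  ring

theorem iteratedDeriv_two_exp_sq_div_eight (x : ℝ) :
    iteratedDeriv 2 (fun y => exp (y ^ 2 / 8)) x = (1 / 4 + x ^ 2 / 16) * exp (x ^ 2 / 8) := by
  have hderiv : deriv (fun y => exp (y ^ 2 / 8)) = fun y => y / 4 * exp (y ^ 2 / 8) :=
    funext fun y => (hasDerivAt_exp_sq_div_eight y).deriv
  have hderiv2 : HasDerivAt (fun y => y / 4 * exp (y ^ 2 / 8))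
      (1 / 4 * exp (x ^ 2 / 8) + x / 4 * (x / 4 * exp (x ^ 2 / 8))) x :=
    ((hasDerivAt_id' x).div_const 4).mul (hasDerivAt_exp_sq_div_eight x)
  rw [iteratedDeriv_succ, iteratedDeriv_one, hderiv, hderiv2.deriv]
  ring

theorem Phi_of_pos {x : ℝ} (hx : 0 < x) : Phi x = exp (x ^ 2 / 8) := if_pos hx

theorem Phi'_of_pos {x : ℝ} (hx : 0 < x) : Phi' x = x / 4 * exp (x ^ 2 / 8) := if_pos hx

theorem Phi'_of_nonpos {x : ℝ} (hx : x ≤ 0) : Phi' x = 0 := if_neg hx.not_gt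

theorem one_le_Phi (x : ℝ) : 1 ≤ Phi x := by
  unfold Phi
  split_ifs
  exacts [one_le_exp (by positivity), le_rfl]

theorem Phi_le_exp (x : ℝ) : Phi x ≤ exp (x ^ 2 / 8) := by
  unfold Phi
  split_ifs
  exacts [le_rfl, one_le_exp (by positivity)]

theorem Phi'_nonneg (x : ℝ) : 0 ≤ Phi' x := by
  unfold Phi'
  split_ifs <;> positivity

theorem Phi'_pos {x : ℝ} (hx : 0 < x) : 0 < Phi' x := by
  rw [Phi'_of_pos hx]
  positivity

theorem sq_lt_of_Phi_lt {x K : ℝ} (hx : 0 < x) (h : Phi x < K) : x ^ 2 < 8 * log K := by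
  rw [Phi_of_pos hx] at h
  have := (lt_log_iff_exp_lt ((exp_pos _).trans h)).mpr h
  linarith

theorem Phi_sub_le_of_abs_le {a b c : ℝ} (ha : 0 < a) (hac : a ≤ c) (hbc : |b| ≤ c) :
    Phi b - Phi a ≤ Phi' a * (b - a) + (1 / 4 + c ^ 2 / 16) * exp (c ^ 2 / 8) / 2 * (b - a) ^ 2 := by
  have hM : ∀ x ∈ uIcc a b,
      iteratedDeriv 2 (fun y => exp (y ^ 2 / 8)) x ≤ (1 / 4 + c ^ 2 / 16) * exp (c ^ 2 / 8) := by
    intro x hx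
    have hxc : x ^ 2 ≤ c ^ 2 := by
      rw [Set.mem_uIcc] at hx
      rcases abs_le.mp hbc with ⟨hb₁, hb₂⟩
      apply sq_le_sq' <;> rcases hx with hx | hx <;> linarith
    rw [iteratedDeriv_two_exp_sq_div_eight]
    gcongr
  have hTaylor := sub_le_deriv_mul_add_of_iteratedDeriv_two_le (by fun_prop) hM
  rw [(hasDerivAt_exp_sq_div_eight a).deriv] at hTaylor
  rw [Phi_of_pos ha, Phi'_of_pos ha]
  linarith [Phi_le_exp b]

noncomputable def driftBound (y : ℝ) : ℝ := 2 / 3 * y - 4 / 5 * (y * log y)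

theorem concaveOn_driftBound : ConcaveOn ℝ (Ici 0) driftBound := by
  have hlin : ConcaveOn ℝ (Ici (0 : ℝ)) fun y => 2 / 3 * y :=
    (concaveOn_id (convex_Ici 0)).smul (by norm_num : (0 : ℝ) ≤ 2 / 3)
  exact hlin.sub (convexOn_mul_log.smul (by norm_num : (0 : ℝ) ≤ 4 / 5))

theorem antitoneOn_driftBound : AntitoneOn driftBound (Ici 1) := by
  intro x hx y _ hxy
  have hx₀ : 0 < x := zero_lt_one.trans_le hx
  have hy₀ : 0 < y := hx₀.trans_le hxy
  -- tangent line of `y log y` at `x`, from `log (x / y) ≤ x / y - 1`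
  have htangent : x * log x + (log x + 1) * (y - x) ≤ y * log y := by
    have h := log_le_sub_one_of_pos (div_pos hx₀ hy₀)
    rw [log_div hx₀.ne' hy₀.ne', le_sub_iff_add_le, le_div_iff₀ hy₀] at h
    linear_combination h
  have hlog : 0 ≤ log x := log_nonneg hx
  unfold driftBound
  nlinarith [mul_nonneg hlog (sub_nonneg.mpr hxy)]

theorem sum_driftBound_le {ι : Type*} {s : Finset ι} {y : ι → ℝ} (hy : ∀ i ∈ s, 0 ≤ y i)
    {B : ℝ} (hB : 1 ≤ B) (hmean : B ≤ (∑ i ∈ s, y i) / #s) :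
    ∑ i ∈ s, driftBound (y i) ≤ #s * driftBound B := by
  have hs : (0 : ℝ) < #s := by
    rcases s.eq_empty_or_nonempty with rfl | hs
    · simp only [sum_empty, Finset.card_empty, Nat.cast_zero, div_zero] at hmean
      linarith
    · exact_mod_cast hs.card_pos
  have hJensen := concaveOn_driftBound.le_map_sum (t := s) (w := fun _ => 1 / (#s : ℝ)) (p := y)
    (fun _ _ => by positivity) (by simp [hs.ne']) hy
  simp only [smul_eq_mul, one_div_mul_eq_div, ← sum_div] at hJensen
  have hmono := antitoneOn_driftBound (mem_Ici.mpr hB) (mem_Ici.mpr (hB.trans hmean)) hmean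
  rw [div_le_iff₀ hs] at hJensen
  calc ∑ i ∈ s, driftBound (y i) ≤ driftBound ((∑ i ∈ s, y i) / #s) * #s := hJensen
    _ ≤ driftBound B * #s := by gcongr
    _ = #s * driftBound B := mul_comm _ _

theorem Phi_step_sub_le {α a d : ℝ} (hα₀ : 0 < α) (hα : α ≤ 1 / 441) (ha : 0 < a)
    (hαa : α * a ^ 2 ≤ 1 / 100) (hd : |d| ≤ 2 * √α) :
    Phi ((1 - α) * a + d) - Phi a ≤ Phi' a * d + α * driftBound (Phi a) := by
  set q := √α
  have hq₀ : 0 ≤ q := sqrt_nonneg α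
  have hq₂ : q ^ 2 = α := sq_sqrt hα₀.le
  have hqa : q * a ≤ 1 / 10 := by nlinarith [mul_nonneg hq₀ ha.le]
  have hαa' : α * a ≤ q / 10 := by rw [← hq₂]; nlinarith
  obtain ⟨hd₁, hd₂⟩ := abs_le.mp hd
  have hshift : |(1 - α) * a + d - a| ≤ 21 / 10 * q := by
    rw [show (1 - α) * a + d - a = d - α * a by ring]
    exact abs_le.mpr ⟨by linarith, by nlinarith⟩
  have hbc : |(1 - α) * a + d| ≤ a + 21 / 10 * q := by
    rw [show (1 - α) * a + d = a + ((1 - α) * a + d - a) by ring]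
    exact (abs_add_le _ _).trans (by rw [abs_of_pos ha]; linarith)
  have hc : (a + 21 / 10 * q) ^ 2 ≤ a ^ 2 + 43 / 100 := by nlinarith
  have hshift_sq : ((1 - α) * a + d - a) ^ 2 ≤ 441 / 100 * α := by
    calc _ = |(1 - α) * a + d - a| ^ 2 := (sq_abs _).symm
      _ ≤ (21 / 10 * q) ^ 2 := by gcongr
      _ = 441 / 100 * α := by rw [mul_pow, hq₂]; norm_num
  have hexp : exp ((a + 21 / 10 * q) ^ 2 / 8) ≤ 800 / 757 * exp (a ^ 2 / 8) :=
    calc exp ((a + 21 / 10 * q) ^ 2 / 8) ≤ exp (43 / 800) * exp (a ^ 2 / 8) := by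
          rw [← exp_add]; gcongr; linarith
      _ ≤ 800 / 757 * exp (a ^ 2 / 8) := by
          gcongr
          exact (exp_bound_div_one_sub_of_interval (by norm_num) (by norm_num)).trans_eq
            (by norm_num)
  have hsecond : (1 / 4 + (a + 21 / 10 * q) ^ 2 / 16) * exp ((a + 21 / 10 * q) ^ 2 / 8) / 2
      * ((1 - α) * a + d - a) ^ 2 ≤ α * exp (a ^ 2 / 8) * (2 / 3 + 3 / 20 * a ^ 2) := by
    have hE := exp_pos (a ^ 2 / 8)
    calc _ ≤ (1 / 4 + (a ^ 2 + 43 / 100) / 16) * (800 / 757 * exp (a ^ 2 / 8)) / 2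
            * (441 / 100 * α) := by gcongr
      _ ≤ α * exp (a ^ 2 / 8) * (2 / 3 + 3 / 20 * a ^ 2) := by nlinarith [mul_pos hα₀ hE]
  have hTaylor := Phi_sub_le_of_abs_le ha (by linarith) hbc
  rw [Phi'_of_pos ha, Phi_of_pos ha] at hTaylor ⊢
  rw [driftBound, log_exp]
  linear_combination hTaylor + hsecond

theorem Phi_step_sub_le_of_Phi_lt {N : ℕ} (hN : 1 ≤ N) {α a d : ℝ} (hα₀ : 0 < α)
    (hα : α < 1 / (800 * log (2.32 * N))) (ha : 0 < a) (hΦ : Phi a < 2.32 * N)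
    (hd : |d| ≤ 2 * √α) :
    Phi ((1 - α) * a + d) - Phi a ≤ Phi' a * d + α * driftBound (Phi a) := by
  have hL : 1 - 2.32⁻¹ ≤ log (2.32 * N) :=
    (one_sub_inv_le_log_of_pos (by norm_num)).trans
      (log_le_log (by norm_num) (by nlinarith [(Nat.one_le_cast (α := ℝ)).mpr hN]))
  have hαL : α * (800 * log (2.32 * N)) < 1 := (lt_div_iff₀ (by nlinarith)).mp hα
  have ha_sq := sq_lt_of_Phi_lt ha hΦ
  exact Phi_step_sub_le hα₀ (by nlinarith) ha (by nlinarith) hd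

/-- if the actions with positive regret have average potential at least
`B ≥ 1` and the overall average potential is below 2.32, then the total potential change
over those actions after one scaled NormalHedge update is at most
`α·|I₂|·B·(2/3 - (4/5)·ln B)`. -/
theorem normalHedge_positive_regret_total_step_bound

    (N : ℕ) (hN : 1 ≤ N)
    (α : ℝ) (hα0 : 0 < α) (hα : α < 1 / (800 * Real.log (2.32 * N)))
    (R g : Fin N → ℝ) (hg : ∀ i, |g i| ≤ Real.sqrt α)
    (p : Fin N → ℝ)
    (hp : ∀ i, p i =
      if 0 < ∑ k, Phi' (R k) then Phi' (R i) / ∑ k, Phi' (R k) else 1 / N)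
    (gA : ℝ) (hgA : gA = ∑ i, p i * g i)
    (R' : Fin N → ℝ) (hR' : ∀ i, R' i = (1 - α) * R i + g i - gA)
    (I₂ : Finset (Fin N)) (hI₂ : ∀ i, i ∈ I₂ ↔ 0 < R i) (hne : I₂.Nonempty)
    (hΨ : (1 / (N : ℝ)) * ∑ i, Phi (R i) < 2.32)
    (B : ℝ) (hB : 1 ≤ B)
    (hB2 : (1 / (I₂.card : ℝ)) * ∑ i ∈ I₂, Phi (R i) ≥ B) :
    ∑ i ∈ I₂, (Phi (R' i) - Phi (R i)) ≤
      α * I₂.card * B * (2 / 3 - (4 / 5) * Real.log B) := by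
  obtain ⟨i₀, hi₀⟩ := hne
  have hS : 0 < ∑ k, Phi' (R k) :=
    sum_pos' (fun k _ => Phi'_nonneg _) ⟨i₀, mem_univ _, Phi'_pos ((hI₂ i₀).mp hi₀)⟩
  have hgA' : gA = ∑ i, Phi' (R i) / (∑ k, Phi' (R k)) * g i := by simp only [hgA, hp, if_pos hS]
  have hgA_le : |gA| ≤ √α := hgA' ▸ abs_sum_div_sum_mul_le (fun _ => Phi'_nonneg _) hS hg
  -- `Φ'` vanishes off `I₂`, and `gA` is the `Φ'`-weighted mean of the gains
  have hcross : ∑ i ∈ I₂, Phi' (R i) * (g i - gA) = 0 := by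
    rw [sum_subset (subset_univ I₂) fun i _ hi => by
      rw [Phi'_of_nonpos (not_lt.mp (mt (hI₂ i).mpr hi)), zero_mul], hgA']
    exact sum_mul_sub_sum_div_sum_mul hS.ne'
  have hsumΦ : ∑ i, Phi (R i) < 2.32 * N := by
    rwa [one_div_mul_eq_div, div_lt_iff₀ (by positivity)] at hΨ
  have hstep : ∀ i ∈ I₂,
      Phi (R' i) - Phi (R i) ≤ Phi' (R i) * (g i - gA) + α * driftBound (Phi (R i)) := by
    intro i hi
    rw [hR', add_sub_assoc]
    refine Phi_step_sub_le_of_Phi_lt hN hα0 hα ((hI₂ i).mp hi) ?_ ?_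
    · exact (single_le_sum (fun j _ => zero_le_one.trans (one_le_Phi (R j))) (mem_univ i)).trans_lt
        hsumΦ
    · exact (abs_sub _ _).trans (by linarith [hg i])
  calc ∑ i ∈ I₂, (Phi (R' i) - Phi (R i))
      ≤ ∑ i ∈ I₂, (Phi' (R i) * (g i - gA) + α * driftBound (Phi (R i))) := sum_le_sum hstep
    _ = α * ∑ i ∈ I₂, driftBound (Phi (R i)) := by rw [sum_add_distrib, hcross, zero_add, mul_sum]
    _ ≤ α * (#I₂ * driftBound B) := by
        gcongr
        refine sum_driftBound_le (fun i _ => zero_le_one.trans (one_le_Phi _)) hB ?_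
        rwa [one_div_mul_eq_div] at hB2
    _ = α * I₂.card * B * (2 / 3 - (4 / 5) * Real.log B) := by unfold driftBound; ring
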